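/- Let F : Pᵒᵖ → ModuleCat k and G : Pᵒᵖ → ModuleCat k be presheaves on a poset P, α : F ⟶ G a natural transformation, and let D ⊆ F, E ⊆ G be the maximal sub-episheaves of F and G respectively. Then α carries D into E; i.e., for all p, α_p(D(p)) ⊆ E(p), so there is an induced natural transformation D ⟶ E making the square with the inclusions commute. -/

import Mathlib

/-! A maximal sub-episheaf contains every sub-episheaf, because the pointwise sum of two
sub-episheaves is again one. The image of a sub-episheaf under a natural transformation is a
sub-episheaf, so it lies in the maximal sub-episheaf of the target. -/

open CategoryTheory Opposite

/-- A subfunctor of a presheaf of vector spaces on a poset. -/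
structure Subfunctor {k : Type} [Field k] {P : Type} [PartialOrder P]
    (F : Pᵒᵖ ⥤ ModuleCat k) where
  toFun : ∀ p : P, Submodule k (F.obj (op p))
  map_le : ∀ (p q : P) (h : p ≤ q),
    Submodule.map (F.map (homOfLE h).op).hom (toFun q) ≤ toFun p

/-- A sub-episheaf: all induced restriction maps are surjective. -/
def Subfunctor.IsEpisheaf {k : Type} [Field k] {P : Type} [PartialOrder P]
    {F : Pᵒᵖ ⥤ ModuleCat k} (E : Subfunctor F) : Prop :=
  ∀ (p q : P) (h : p ≤ q),
    Submodule.map (F.map (homOfLE h).op).hom (E.toFun q) = E.toFun p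

namespace Subfunctor

variable {k : Type} [Field k] {P : Type} [PartialOrder P] {F G : Pᵒᵖ ⥤ ModuleCat k}

lemma map_restrict_map_app (α : F ⟶ G) {p q : P} (h : p ≤ q) (S : Submodule k (F.obj (op q))) :
    Submodule.map (G.map (homOfLE h).op).hom (Submodule.map (α.app (op q)).hom S) =
      Submodule.map (α.app (op p)).hom (Submodule.map (F.map (homOfLE h).op).hom S) := by
  rw [← Submodule.map_comp, ← Submodule.map_comp]
  exact congrArg (Submodule.map · S) (congrArg ModuleCat.Hom.hom (α.naturality _)).symm

def map (α : F ⟶ G) (D : Subfunctor F) : Subfunctor G where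
  toFun p := Submodule.map (α.app (op p)).hom (D.toFun p)
  map_le p q h := by
    rw [map_restrict_map_app]
    exact Submodule.map_mono (D.map_le p q h)

def sup (E E' : Subfunctor F) : Subfunctor F where
  toFun p := E.toFun p ⊔ E'.toFun p
  map_le p q h := by
    rw [Submodule.map_sup]
    exact sup_le_sup (E.map_le p q h) (E'.map_le p q h)

lemma IsEpisheaf.map {D : Subfunctor F} (hD : D.IsEpisheaf) (α : F ⟶ G) :
    (D.map α).IsEpisheaf := fun p q h => by
  simp only [Subfunctor.map, map_restrict_map_app, hD p q h]

lemma IsEpisheaf.sup {E E' : Subfunctor F} (hE : E.IsEpisheaf) (hE' : E'.IsEpisheaf) :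
    (E.sup E').IsEpisheaf := fun p q h => by
  simp only [Subfunctor.sup, Submodule.map_sup, hE p q h, hE' p q h]

lemma le_of_isEpisheaf_of_maximal {E : Subfunctor F} (hE : E.IsEpisheaf)
    (hEmax : ∀ E' : Subfunctor F, E'.IsEpisheaf →
      (∀ p : P, E.toFun p ≤ E'.toFun p) → ∀ p : P, E'.toFun p = E.toFun p)
    {D : Subfunctor F} (hD : D.IsEpisheaf) (p : P) : D.toFun p ≤ E.toFun p := by
  rw [← hEmax (E.sup D) (hE.sup hD) (fun _ => le_sup_left) p]
  exact le_sup_right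

end Subfunctor

theorem stmt_9_general {k : Type} [Field k] {P : Type} [PartialOrder P]
    (F G : Pᵒᵖ ⥤ ModuleCat k) (α : F ⟶ G)
    (D : Subfunctor F) (hD : D.IsEpisheaf)
    (E : Subfunctor G) (hEepi : E.IsEpisheaf)
    (hEmax : ∀ E' : Subfunctor G, E'.IsEpisheaf →
      (∀ p : P, E.toFun p ≤ E'.toFun p) → ∀ p : P, E'.toFun p = E.toFun p)
    (p : P) :
    Submodule.map (α.app (op p)).hom (D.toFun p) ≤ E.toFun p :=
  Subfunctor.le_of_isEpisheaf_of_maximal hEepi hEmax (hD.map α) p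

/-- a natural transformation `α : F ⟶ G` carries the maximal
sub-episheaf `D` of `F` into the maximal sub-episheaf `E` of `G`; hence epification
is functorial. -/
theorem stmt_9 {k : Type} [Field k] {P : Type} [PartialOrder P]
    (F G : Pᵒᵖ ⥤ ModuleCat k) (α : F ⟶ G)
    (D : Subfunctor F) (hD : D.IsEpisheaf)
    (hDmax : ∀ D' : Subfunctor F, D'.IsEpisheaf →
      (∀ p : P, D.toFun p ≤ D'.toFun p) → ∀ p : P, D'.toFun p = D.toFun p)
    (E : Subfunctor G) (hEepi : E.IsEpisheaf)
    (hEmax : ∀ E' : Subfunctor G, E'.IsEpisheaf →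
      (∀ p : P, E.toFun p ≤ E'.toFun p) → ∀ p : P, E'.toFun p = E.toFun p)
    (p : P) :
    Submodule.map (α.app (op p)).hom (D.toFun p) ≤ E.toFun p :=
  stmt_9_general F G α D hD E hEepi hEmax p
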